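/- arXiv:1002.2984 — 2 statements merged into one kernel-verified Lean document; each statement's English description precedes it below -/
import Mathlib

section
/- Let g = 3k+1 ≥ 7, and consider the vanishing sequence (a_0, ..., a_{g-1}) whose ramification sequence is (0,0,1,1,2,2,...,k-1,k-1,k,k+2,k+4,...,g-5,g-3,g-1). Then the complement in ℕ of the set G = {a_j + 1 : 0 ≤ j ≤ g-1} is a numerical semigroup with exactly g gaps. -/
/-- For `g = 3k+1 ≥ 7`, the gap set `{a_j + 1 : 0 ≤ j ≤ g-1}` associated to the
vanishing sequence `a_j = α_j + j` of the ramification sequence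
`(0,0,1,1,2,2,…,k-1,k-1,k,k+2,k+4,…,g-5,g-3,g-1)` has cardinality `g` and its
complement in ℕ is a numerical semigroup. -/
theorem cyclic_triple_cover_gap_set (k g : ℕ) (hgk : g = 3 * k + 1) (hg : 7 ≤ g) :
    let α : ℕ → ℕ := fun j => if j ≤ 2 * k then j / 2 else k + 2 * (j - 2 * k)
    let a : ℕ → ℕ := fun j => α j + j
    let G : Set ℕ := {n | ∃ j < g, n = a j + 1}
    G.ncard = g ∧ (0 : ℕ) ∈ Gᶜ ∧ (∀ x ∈ Gᶜ, ∀ y ∈ Gᶜ, x + y ∈ Gᶜ) := by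
  intro α a G
  have hk : 2 ≤ k := by omega
  have hmem : ∀ n, n ∈ G ↔ (∃ m, m ≤ 2*k ∧ n = 3*m+1) ∨ (∃ m, m < k ∧ n = 3*m+2) := by
    intro n
    constructor
    · rintro ⟨j, hj, rfl⟩
      simp only [a, α]
      split_ifs with h
      · rcases Nat.even_or_odd j with ⟨m, rfl⟩ | ⟨m, rfl⟩
        · left; exact ⟨m, by omega, by omega⟩
        · right; exact ⟨m, by omega, by omega⟩
      · left; exact ⟨j - k, by omega, by omega⟩
    · rintro (⟨m, hm, rfl⟩ | ⟨m, hm, rfl⟩)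
      · by_cases h : m ≤ k
        · exact ⟨2*m, by omega, by simp only [a, α]; rw [if_pos (by omega)]; omega⟩
        · exact ⟨m + k, by omega, by simp only [a, α]; rw [if_neg (by omega)]; omega⟩
      · exact ⟨2*m+1, by omega, by simp only [a, α]; rw [if_pos (by omega)]; omega⟩
  have hmem' : ∀ n, n ∈ G ↔ (n % 3 = 1 ∧ n ≤ 6*k+1) ∨ (n % 3 = 2 ∧ n < 3*k) := by
    intro n
    rw [hmem n]
    constructor
    · rintro (⟨m, hm, rfl⟩ | ⟨m, hm, rfl⟩) <;> [left; right] <;> omega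
    · rintro (⟨h1, h2⟩ | ⟨h1, h2⟩) <;> [left; right] <;> exact ⟨n/3, by omega, by omega⟩
  have hGF : G = ↑(((Finset.range (2*k+1)).image (fun m => 3*m+1)) ∪
      ((Finset.range k).image (fun m => 3*m+2))) := by
    ext n
    simp only [hmem, Finset.coe_union, Finset.coe_image, Finset.coe_range, Set.mem_union,
      Set.mem_image, Set.mem_Iio]
    constructor <;> rintro (⟨m, h1, h2⟩ | ⟨m, h1, h2⟩) <;> [left; right; left; right] <;>
      exact ⟨m, by omega, by omega⟩
  refine ⟨?_, ?_, ?_⟩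
  · rw [hGF, Set.ncard_coe_finset, Finset.card_union_of_disjoint, Finset.card_image_of_injective,
      Finset.card_image_of_injective, Finset.card_range, Finset.card_range]
    · omega
    · intro x y h; dsimp only at h; omega
    · intro x y h; dsimp only at h; omega
    · rw [Finset.disjoint_left]
      intro n hn hn'
      simp only [Finset.mem_image, Finset.mem_range] at hn hn'
      obtain ⟨m1, _, rfl⟩ := hn
      obtain ⟨m2, _, h2⟩ := hn'
      omega
  · simp only [Set.mem_compl_iff, hmem']
    omega
  · intro x hx y hy
    simp only [Set.mem_compl_iff, hmem'] at *
    omega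
end

section
/- For g = 5, the only sets G ⊆ ℕ of cardinality 5 with 9 ∈ G that are gap sets of numerical semigroups and contain 1, are: {1,2,3,4,9}, {1,2,3,5,9}, and {1,3,5,7,9}. -/
/-!
Since `9 = a + (9 - a)` is a gap and the non-gaps are closed under addition, every splitting of `9`
into two summands contains a gap. If `2` is a gap, then `3` (from `3 + 6`, and `6 = 3 + 3`) and one
of `4`, `5` are gaps; if `2` is not, then `4 = 2 + 2` and `6 = 2 + 4` are not, forcing `7, 5, 3`.
Together with `1` and `9` this already exhibits five gaps, hence all of them.
-/

namespace Set

theorem mem_or_mem_of_add_mem_of_compl_add_closed {M : Type*} [Add M] {G : Set M}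
    (hadd : ∀ a ∈ Gᶜ, ∀ b ∈ Gᶜ, a + b ∈ Gᶜ) {a b : M} (h : a + b ∈ G) : a ∈ G ∨ b ∈ G := by
  by_contra! hab
  exact hadd a hab.1 b hab.2 h

theorem eq_of_subset_of_ncard_eq {α : Type*} {S G : Set α} (hS : S ⊆ G)
    (hcard : G.ncard = S.ncard) (hpos : S.ncard ≠ 0) : G = S :=
  (eq_of_subset_of_ncard_le hS hcard.le (finite_of_ncard_ne_zero (hcard ▸ hpos))).symm

end Set

open Set in
theorem superset_of_nine_mem_of_compl_add_closed {G : Set ℕ} (h9 : 9 ∈ G) (h1 : 1 ∈ G)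
    (hadd : ∀ a ∈ Gᶜ, ∀ b ∈ Gᶜ, a + b ∈ Gᶜ) :
    {1, 2, 3, 4, 9} ⊆ G ∨ {1, 2, 3, 5, 9} ⊆ G ∨ {1, 3, 5, 7, 9} ⊆ G := by
  have split : ∀ a b, a + b = 9 → a ∈ G ∨ b ∈ G := fun a b hab ↦
    mem_or_mem_of_add_mem_of_compl_add_closed hadd (hab ▸ h9)
  have half : ∀ a, a + a ∈ G → a ∈ G := fun a h ↦
    (mem_or_mem_of_add_mem_of_compl_add_closed hadd h).elim id id
  simp only [insert_subset_iff, singleton_subset_iff]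
  by_cases h2 : 2 ∈ G
  · have h3 : 3 ∈ G := (split 3 6 rfl).elim id (half 3)
    rcases split 4 5 rfl with h4 | h5
    · exact Or.inl ⟨h1, h2, h3, h4, h9⟩
    · exact Or.inr (Or.inl ⟨h1, h2, h3, h5, h9⟩)
  · have h4 : 4 ∉ G := fun h ↦ h2 (half 2 h)
    have h3 : 3 ∈ G := (split 3 6 rfl).resolve_right (hadd 2 h2 4 h4)
    have h5 : 5 ∈ G := (split 4 5 rfl).resolve_left h4
    have h7 : 7 ∈ G := (split 2 7 rfl).resolve_left h2
    exact Or.inr (Or.inr ⟨h1, h3, h5, h7, h9⟩)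

theorem genus_five_subcanonical_gap_sets_general
    (G : Set ℕ) (hcard : G.ncard = 5) (h9 : (9 : ℕ) ∈ G) (h1 : (1 : ℕ) ∈ G)
    (hadd : ∀ a ∈ Gᶜ, ∀ b ∈ Gᶜ, a + b ∈ Gᶜ) :
    G = {1, 2, 3, 4, 9} ∨ G = {1, 2, 3, 5, 9} ∨ G = {1, 3, 5, 7, 9} := by
  have five : ∀ S : Finset ℕ, S.card = 5 → (S : Set ℕ) ⊆ G → G = S := fun S hS hSG ↦
    Set.eq_of_subset_of_ncard_eq hSG (by rw [Set.ncard_coe_finset, hS, hcard]) (by simp [hS])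
  rcases superset_of_nine_mem_of_compl_add_closed h9 h1 hadd with h | h | h
  · exact Or.inl (by simpa using five {1, 2, 3, 4, 9} rfl (by simpa using h))
  · exact Or.inr (Or.inl (by simpa using five {1, 2, 3, 5, 9} rfl (by simpa using h)))
  · exact Or.inr (Or.inr (by simpa using five {1, 3, 5, 7, 9} rfl (by simpa using h)))

/-- For `g = 5`: the only sets `G ⊆ ℕ` of cardinality `5` containing `1` and `9` that
are gap sets of numerical semigroups are `{1,2,3,4,9}`, `{1,2,3,5,9}`, `{1,3,5,7,9}`. -/
theorem genus_five_subcanonical_gap_sets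
    (G : Set ℕ) (hcard : G.ncard = 5) (h9 : (9 : ℕ) ∈ G) (h1 : (1 : ℕ) ∈ G)
    (h0 : (0 : ℕ) ∈ Gᶜ)
    (hadd : ∀ a ∈ Gᶜ, ∀ b ∈ Gᶜ, a + b ∈ Gᶜ) :
    G = {1, 2, 3, 4, 9} ∨ G = {1, 2, 3, 5, 9} ∨ G = {1, 3, 5, 7, 9} :=
  genus_five_subcanonical_gap_sets_general G hcard h9 h1 hadd
end
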